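/- arXiv:1404.0141 — 5 statements merged into one kernel-verified Lean document; each statement's English description precedes it below -/
import Mathlib

section
/- Let h : [0,1] → [0,∞) be a C² function with h(0) = h(1) = 0, and let c ≥ 0. Assume that for all t ∈ [0,1], h''(t) ≥ -|h'(t)| - c. Then h(t) ≤ c·t·(1-t) for all t ∈ [0,1]. -/
/-!
Compare `h` with the parabola `K t (1 - t)` for every `K > c`. At an interior maximum of the
difference its first derivative vanishes, so `h' t = K (1 - 2t)` and `|h' t| ≤ K`; the differential
inequality then makes its second derivative at least `K - c > 0`, which is impossible at a maximum.
Hence `h t ≤ K t (1 - t)`, and letting `K ↓ c` gives the claim.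
-/

open Set Filter Topology

/-- No differentiability is needed: a positive `deriv (deriv f) x` would make `x` also a local
minimum by the second derivative test, so `f` would be locally constant. -/
theorem IsLocalMax.deriv_deriv_nonpos {f : ℝ → ℝ} {x : ℝ} (hmax : IsLocalMax f x)
    (hf : ContinuousAt f x) : deriv (deriv f) x ≤ 0 := by
  by_contra! hpos
  have hmin : IsLocalMin f x := isLocalMin_of_deriv_deriv_pos hpos hmax.deriv_eq_zero hf
  have hconst : f =ᶠ[𝓝 x] fun _ => f x := by
    filter_upwards [hmax, hmin] with y hy_le hy_ge using le_antisymm hy_le hy_ge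
  have hderiv : deriv f =ᶠ[𝓝 x] fun _ => 0 := by
    filter_upwards [hconst.eventuallyEq_nhds] with y hy
    rw [hy.deriv_eq, deriv_const]
  rw [hderiv.deriv_eq, deriv_const] at hpos
  exact lt_irrefl 0 hpos

theorem le_max_endpoints_of_deriv2_pos_of_deriv_eq_zero {f f' f'' : ℝ → ℝ} {a b : ℝ}
    (hf : ContinuousOn f (Icc a b))
    (hf' : ∀ x ∈ Ioo a b, HasDerivAt f (f' x) x)
    (hf'' : ∀ x ∈ Ioo a b, HasDerivAt f' (f'' x) x)
    (hcrit : ∀ x ∈ Ioo a b, f' x = 0 → 0 < f'' x) :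
    ∀ x ∈ Icc a b, f x ≤ max (f a) (f b) := by
  intro x hx
  obtain ⟨m, hm, hmax⟩ := isCompact_Icc.exists_isMaxOn ⟨x, hx⟩ hf
  refine (hmax hx).trans ?_
  rcases eq_endpoints_or_mem_Ioo_of_mem_Icc hm with rfl | rfl | hm_int
  · exact le_max_left _ _
  · exact le_max_right _ _
  · have hloc : IsLocalMax f m := hmax.isLocalMax (Icc_mem_nhds hm_int.1 hm_int.2)
    have hderiv : deriv f =ᶠ[𝓝 m] f' := by
      filter_upwards [Ioo_mem_nhds hm_int.1 hm_int.2] with y hy using (hf' y hy).deriv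
    have hsecond : deriv (deriv f) m = f'' m := by
      rw [hderiv.deriv_eq, (hf'' m hm_int).deriv]
    have hnonpos := hloc.deriv_deriv_nonpos (hf' m hm_int).continuousAt
    have hpos := hcrit m hm_int (hloc.hasDerivAt_eq_zero (hf' m hm_int))
    linarith

theorem hasDerivAt_mul_mul_one_sub (K t : ℝ) :
    HasDerivAt (fun s => K * s * (1 - s)) (K * (1 - 2 * t)) t :=
  (((hasDerivAt_id' t).const_mul K).mul ((hasDerivAt_id' t).const_sub 1)).congr_deriv
    (by ring)

theorem hasDerivAt_const_mul_one_sub_two_mul (K t : ℝ) :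
    HasDerivAt (fun s => K * (1 - 2 * s)) (-(2 * K)) t :=
  ((((hasDerivAt_id' t).const_mul 2).const_sub 1).const_mul K).congr_deriv (by ring)

theorem le_mul_mul_one_sub_of_lt {h h' h'' : ℝ → ℝ} {c K : ℝ} (hK : 0 ≤ K) (hcK : c < K)
    (hcont : ContinuousOn h (Icc 0 1)) (h0 : h 0 = 0) (h1 : h 1 = 0)
    (hd1 : ∀ t ∈ Ioo (0 : ℝ) 1, HasDerivAt h (h' t) t)
    (hd2 : ∀ t ∈ Ioo (0 : ℝ) 1, HasDerivAt h' (h'' t) t)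
    (hineq : ∀ t ∈ Ioo (0 : ℝ) 1, -|h' t| - c ≤ h'' t) :
    ∀ t ∈ Icc (0 : ℝ) 1, h t ≤ K * t * (1 - t) := by
  have hdiff := le_max_endpoints_of_deriv2_pos_of_deriv_eq_zero
    (f := fun t => h t - K * t * (1 - t)) (f' := fun t => h' t - K * (1 - 2 * t))
    (f'' := fun t => h'' t + 2 * K)
    (hcont.sub (by fun_prop))
    (fun t ht => (hd1 t ht).sub (hasDerivAt_mul_mul_one_sub K t))
    (fun t ht => ((hd2 t ht).sub (hasDerivAt_const_mul_one_sub_two_mul K t)).congr_deriv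
      (by ring))
    (fun t ht hcrit => by
      have hslope : |h' t| ≤ K := by
        rw [sub_eq_zero.mp hcrit, abs_le]
        constructor <;> nlinarith [ht.1, ht.2]
      linarith [hineq t ht])
  intro t ht
  simpa [h0, h1] using hdiff t ht

theorem stmt_0_general (h h' h'' : ℝ → ℝ) (c : ℝ)
    (hc : 0 ≤ c)
    (h0 : h 0 = 0) (h1 : h 1 = 0)
    (hd1 : ∀ t ∈ Set.Icc (0:ℝ) 1, HasDerivAt h (h' t) t)
    (hd2 : ∀ t ∈ Set.Icc (0:ℝ) 1, HasDerivAt h' (h'' t) t)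
    (hineq : ∀ t ∈ Set.Icc (0:ℝ) 1, -|h' t| - c ≤ h'' t) :
    ∀ t ∈ Set.Icc (0:ℝ) 1, h t ≤ c * t * (1 - t) := by
  intro t ht
  have hcont : ContinuousOn h (Icc 0 1) :=
    fun s hs => (hd1 s hs).continuousAt.continuousWithinAt
  refine le_of_forall_pos_le_add fun ε hε => ?_
  have hbound := le_mul_mul_one_sub_of_lt (by linarith) (lt_add_of_pos_right c hε) hcont h0 h1
    (fun s hs => hd1 s (Ioo_subset_Icc_self hs)) (fun s hs => hd2 s (Ioo_subset_Icc_self hs))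
    (fun s hs => hineq s (Ioo_subset_Icc_self hs)) t ht
  have hparabola : t * (1 - t) ≤ 1 := by nlinarith [ht.1, ht.2]
  nlinarith [mul_le_mul_of_nonneg_left hparabola hε.le]

/-- If `h : [0,1] → [0,∞)` is C² with `h 0 = h 1 = 0`, `c ≥ 0`, and
`h'' t ≥ -|h' t| - c` on `[0,1]`, then `h t ≤ c * t * (1 - t)` on `[0,1]`. -/
theorem stmt_0 (h h' h'' : ℝ → ℝ) (c : ℝ)
    (hc : 0 ≤ c)
    (hpos : ∀ t ∈ Set.Icc (0:ℝ) 1, 0 ≤ h t)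
    (h0 : h 0 = 0) (h1 : h 1 = 0)
    (hd1 : ∀ t ∈ Set.Icc (0:ℝ) 1, HasDerivAt h (h' t) t)
    (hd2 : ∀ t ∈ Set.Icc (0:ℝ) 1, HasDerivAt h' (h'' t) t)
    (hcont : ContinuousOn h'' (Set.Icc (0:ℝ) 1))
    (hineq : ∀ t ∈ Set.Icc (0:ℝ) 1, -|h' t| - c ≤ h'' t) :
    ∀ t ∈ Set.Icc (0:ℝ) 1, h t ≤ c * t * (1 - t) :=
  stmt_0_general h h' h'' c hc h0 h1 hd1 hd2 hineq
end

section
/- Let h : [0,1] → [0,∞) be a C² function with h(0) = h(1) = 0, and let c ≥ 0 and ε ≥ 0 satisfy: h''(t) ≥ -|h'(t)| - c for all t ∈ [0,1], and c ≤ sup_{[0,1]} h + ε. Then sup_{[0,1]} h ≤ ε/3. -/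
/-!
Let `t₀` be a maximum point of `h`, so `h' t₀ = 0` if `t₀` is interior. On the side of `t₀` of
length `L ≤ 1/2`, the function `g = ∓h'` starts at `0` and satisfies `g' ≤ |g| + c`; a Grönwall
barrier gives `g(t) ≤ c (e^{|t - t₀|} - 1)`, and integrating,
`sup h ≤ c (e^L - 1 - L) ≤ c L² ≤ c/4`.
Then `sup h ≤ (sup h + ε) / 4`, i.e. `sup h ≤ ε / 3`.
-/

open Set Real

theorem le_mul_exp_sub_one_of_deriv_right_le_abs_add {f f' : ℝ → ℝ} {a b c : ℝ} (hc : 0 ≤ c)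
    (hf : ContinuousOn f (Icc a b)) (hf' : ∀ x ∈ Ico a b, HasDerivWithinAt f (f' x) (Ici x) x)
    (ha : f a ≤ 0) (bound : ∀ x ∈ Ico a b, f' x ≤ |f x| + c) :
    ∀ x ∈ Icc a b, f x ≤ c * (exp (x - a) - 1) := by
  -- The barrier `gronwallBound 0 1 c'` is nonnegative, so where `f` touches it, `|f| = f`.
  have H : ∀ x ∈ Icc a b, ∀ c' ∈ Ioi c, f x ≤ gronwallBound 0 1 c' (x - a) := by
    intro x hx c' (hc' : c < c')
    refine image_le_of_deriv_right_lt_deriv_boundary hf hf'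
      (by rwa [sub_self, gronwallBound_x0]) (fun y => hasDerivAt_gronwallBound_shift 0 1 c' y a)
      (fun y hy hfy => ?_) hx
    have hB : 0 ≤ gronwallBound 0 1 c' (y - a) := by
      simpa only [gronwallBound_x0] using
        gronwallBound_mono le_rfl (hc.trans hc'.le) zero_le_one (sub_nonneg.2 hy.1)
    have := bound y hy
    rw [hfy, abs_of_nonneg hB] at this
    linarith
  intro x hx
  have hlim : f x ≤ gronwallBound 0 1 c (x - a) :=
    ContinuousWithinAt.closure_le (f := fun _ => f x) (g := fun c' => gronwallBound 0 1 c' (x - a))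
      (by simp) continuousWithinAt_const
      (gronwallBound_continuous_ε 0 1 (x - a)).continuousWithinAt (H x hx)
  simpa [gronwallBound_of_K_ne_0] using hlim

theorem hasDerivAt_mul_exp_sub_one_sub (a c x : ℝ) :
    HasDerivAt (fun t => c * (exp (t - a) - 1 - (t - a))) (c * (exp (x - a) - 1)) x := by
  have hx : HasDerivAt (fun t => t - a) 1 x := (hasDerivAt_id x).sub_const a
  simpa using ((hx.exp.sub_const 1).sub hx).const_mul c

theorem sub_le_mul_exp_sub_one_sub_of_deriv_left_eq_zero {f f' f'' : ℝ → ℝ} {a b c : ℝ}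
    (hc : 0 ≤ c) (hab : a ≤ b)
    (hf : ∀ t ∈ Icc a b, HasDerivAt f (f' t) t) (hf' : ∀ t ∈ Icc a b, HasDerivAt f' (f'' t) t)
    (hf'' : ∀ t ∈ Icc a b, -|f' t| - c ≤ f'' t) (ha : f' a = 0) :
    f a - f b ≤ c * (exp (b - a) - 1 - (b - a)) := by
  have hslope : ∀ t ∈ Icc a b, -f' t ≤ c * (exp (t - a) - 1) :=
    le_mul_exp_sub_one_of_deriv_right_le_abs_add hc
      (fun t ht => (hf' t ht).continuousAt.neg.continuousWithinAt)
      (fun t ht => (hf' t (Ico_subset_Icc_self ht)).neg.hasDerivWithinAt) (by simp [ha])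
      (fun t ht => by rw [abs_neg]; linarith [hf'' t (Ico_subset_Icc_self ht)])
  refine image_le_of_deriv_right_le_deriv_boundary (f := fun t => f a - f t)
    (fun t ht => (continuousAt_const.sub (hf t ht).continuousAt).continuousWithinAt)
    (fun t ht => ((hf t (Ico_subset_Icc_self ht)).const_sub _).hasDerivWithinAt) (by simp)
    (fun t _ => (hasDerivAt_mul_exp_sub_one_sub a c t).continuousAt.continuousWithinAt)
    (fun t _ => (hasDerivAt_mul_exp_sub_one_sub a c t).hasDerivWithinAt)
    (fun t ht => hslope t (Ico_subset_Icc_self ht)) (right_mem_Icc.2 hab)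

theorem sub_le_mul_exp_sub_one_sub_of_deriv_right_eq_zero {f f' f'' : ℝ → ℝ} {a b c : ℝ}
    (hc : 0 ≤ c) (hab : a ≤ b)
    (hf : ∀ t ∈ Icc a b, HasDerivAt f (f' t) t) (hf' : ∀ t ∈ Icc a b, HasDerivAt f' (f'' t) t)
    (hf'' : ∀ t ∈ Icc a b, -|f' t| - c ≤ f'' t) (hb : f' b = 0) :
    f b - f a ≤ c * (exp (b - a) - 1 - (b - a)) := by
  have hmem : ∀ t ∈ Icc (-b) (-a), -t ∈ Icc a b := fun t ht =>
    ⟨by linarith [ht.2], by linarith [ht.1]⟩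
  have hreflected := sub_le_mul_exp_sub_one_sub_of_deriv_left_eq_zero (f := fun t => f (-t))
    (f' := fun t => -f' (-t)) (f'' := fun t => f'' (-t)) hc (neg_le_neg hab)
    (fun t ht => ((hf (-t) (hmem t ht)).comp t (hasDerivAt_neg t)).congr_deriv (mul_neg_one _))
    (fun t ht => ((hf' (-t) (hmem t ht)).comp t (hasDerivAt_neg t)).neg.congr_deriv (by ring))
    (fun t ht => by simpa using hf'' (-t) (hmem t ht)) (by simp [hb])
  rw [neg_neg, neg_neg, neg_sub_neg] at hreflected
  linarith

theorem mul_exp_sub_one_sub_le_div_four {c L : ℝ} (hc : 0 ≤ c) (hL : |L| ≤ 1 / 2) :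
    c * (exp L - 1 - L) ≤ c / 4 := by
  have hexp : exp L - 1 - L ≤ L ^ 2 :=
    (le_abs_self _).trans (abs_exp_sub_one_sub_id_le (hL.trans (by norm_num)))
  have hsq : L ^ 2 ≤ 1 / 4 := by nlinarith [sq_abs L, abs_nonneg L]
  nlinarith

theorem le_div_four_of_isMaxOn {h h' h'' : ℝ → ℝ} {c t₀ : ℝ} (hc : 0 ≤ c)
    (h0 : h 0 = 0) (h1 : h 1 = 0)
    (hd1 : ∀ t ∈ Icc (0 : ℝ) 1, HasDerivAt h (h' t) t)
    (hd2 : ∀ t ∈ Icc (0 : ℝ) 1, HasDerivAt h' (h'' t) t)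
    (hineq : ∀ t ∈ Icc (0 : ℝ) 1, -|h' t| - c ≤ h'' t)
    (ht₀ : t₀ ∈ Icc (0 : ℝ) 1) (hmax : IsMaxOn h (Icc 0 1) t₀) :
    h t₀ ≤ c / 4 := by
  rcases ht₀.1.eq_or_lt with rfl | h0t
  · rw [h0]; positivity
  rcases ht₀.2.eq_or_lt with rfl | h1t
  · rw [h1]; positivity
  have hder : h' t₀ = 0 :=
    (hmax.isLocalMax (Icc_mem_nhds h0t h1t)).hasDerivAt_eq_zero (hd1 t₀ ht₀)
  rcases le_total t₀ (1 / 2) with hle | hge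
  · have hsub : Icc 0 t₀ ⊆ Icc (0 : ℝ) 1 := Icc_subset_Icc_right ht₀.2
    have hleft := sub_le_mul_exp_sub_one_sub_of_deriv_right_eq_zero hc ht₀.1
      (fun t ht => hd1 t (hsub ht)) (fun t ht => hd2 t (hsub ht))
      (fun t ht => hineq t (hsub ht)) hder
    have hnum := mul_exp_sub_one_sub_le_div_four hc (L := t₀ - 0)
      (by rw [abs_le]; constructor <;> linarith)
    linarith
  · have hsub : Icc t₀ 1 ⊆ Icc (0 : ℝ) 1 := Icc_subset_Icc_left ht₀.1
    have hright := sub_le_mul_exp_sub_one_sub_of_deriv_left_eq_zero hc ht₀.2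
      (fun t ht => hd1 t (hsub ht)) (fun t ht => hd2 t (hsub ht))
      (fun t ht => hineq t (hsub ht)) hder
    have hnum := mul_exp_sub_one_sub_le_div_four hc (L := 1 - t₀)
      (by rw [abs_le]; constructor <;> linarith)
    linarith

theorem stmt_1_general (h h' h'' : ℝ → ℝ) (c ε : ℝ)
    (hc : 0 ≤ c)
    (h0 : h 0 = 0) (h1 : h 1 = 0)
    (hd1 : ∀ t ∈ Set.Icc (0:ℝ) 1, HasDerivAt h (h' t) t)
    (hd2 : ∀ t ∈ Set.Icc (0:ℝ) 1, HasDerivAt h' (h'' t) t)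
    (hineq : ∀ t ∈ Set.Icc (0:ℝ) 1, -|h' t| - c ≤ h'' t)
    (hcsup : c ≤ sSup (h '' Set.Icc (0:ℝ) 1) + ε) :
    sSup (h '' Set.Icc (0:ℝ) 1) ≤ ε / 3 := by
  obtain ⟨t₀, ht₀, hmax⟩ := isCompact_Icc.exists_isMaxOn (nonempty_Icc.2 zero_le_one)
    fun t ht => (hd1 t ht).continuousAt.continuousWithinAt
  have hsup : sSup (h '' Icc 0 1) = h t₀ :=
    IsGreatest.csSup_eq ⟨mem_image_of_mem h ht₀, forall_mem_image.2 hmax⟩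
  have hquarter := le_div_four_of_isMaxOn hc h0 h1 hd1 hd2 hineq ht₀ hmax
  rw [hsup] at hcsup ⊢
  linarith

/-- If moreover `c ≤ sup_{[0,1]} h + ε`, then `sup_{[0,1]} h ≤ ε/3`. -/
theorem stmt_1 (h h' h'' : ℝ → ℝ) (c ε : ℝ)
    (hc : 0 ≤ c) (hε : 0 ≤ ε)
    (hpos : ∀ t ∈ Set.Icc (0:ℝ) 1, 0 ≤ h t)
    (h0 : h 0 = 0) (h1 : h 1 = 0)
    (hd1 : ∀ t ∈ Set.Icc (0:ℝ) 1, HasDerivAt h (h' t) t)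
    (hd2 : ∀ t ∈ Set.Icc (0:ℝ) 1, HasDerivAt h' (h'' t) t)
    (hcont : ContinuousOn h'' (Set.Icc (0:ℝ) 1))
    (hineq : ∀ t ∈ Set.Icc (0:ℝ) 1, -|h' t| - c ≤ h'' t)
    (hcsup : c ≤ sSup (h '' Set.Icc (0:ℝ) 1) + ε) :
    sSup (h '' Set.Icc (0:ℝ) 1) ≤ ε / 3 :=
  stmt_1_general h h' h'' c ε hc h0 h1 hd1 hd2 hineq hcsup
end

section
/- Let h : [0,1] → [0,∞) be a C² function with h(0) = h(1) = 0, and let c, C > 0. Assume h''(t) ≥ -C·|h'(t)| - c for all t ∈ [0,1]. Then h(t) ≤ 4·c·e^{1+C}·t·(1-t) for all t ∈ [0,1]. -/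
/-!
With the integrating factor `exp (C u)`, the quantity `exp (C u) * (C * h' u + c)` is
nondecreasing as long as `h' ≥ 0`. So if the slope `h' s` were larger than `c e^C`, then `h'`
would stay positive up to `1` and `h 1 > h s ≥ 0`. The mean value theorem on `[0, t]` then
gives `h t ≤ c e^C t`, the reflection `t ↦ 1 - t` gives `h t ≤ c e^C (1 - t)`, and
`min t (1 - t) ≤ 2 t (1 - t)`.
-/

open Set Real

lemma exp_sub_one_le_mul_exp (x : ℝ) : exp x - 1 ≤ x * exp x := by
  have : (1 - x) * exp x ≤ 1 :=
    calc (1 - x) * exp x ≤ exp (-x) * exp x := by gcongr; exact one_sub_le_exp_neg x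
      _ = 1 := by rw [← exp_add]; simp
  linarith

lemma exists_first_nonpos {g : ℝ → ℝ} {a b x : ℝ} (hg : ContinuousOn g (Icc a b))
    (hx : x ∈ Icc a b) (hgx : g x ≤ 0) :
    ∃ T ∈ Icc a b, g T ≤ 0 ∧ ∀ u ∈ Ico a T, 0 < g u := by
  have hclosed : IsClosed (Icc a b ∩ g ⁻¹' Iic 0) :=
    hg.preimage_isClosed_of_isClosed isClosed_Icc isClosed_Iic
  obtain ⟨T, ⟨hT, hgT⟩, hleast⟩ :=
    (isCompact_Icc.of_isClosed_subset hclosed inter_subset_left).exists_isLeast ⟨x, hx, hgx⟩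
  refine ⟨T, hT, hgT, fun u hu => ?_⟩
  by_contra! hgu
  exact (hleast ⟨⟨hu.1, hu.2.le.trans hT.2⟩, hgu⟩).not_gt hu.2

section IntegratingFactor

variable {h h' h'' : ℝ → ℝ} {a b c C : ℝ}

lemma monotoneOn_exp_mul_mul_add (hC : 0 ≤ C)
    (hd2 : ∀ u ∈ Icc a b, HasDerivAt h' (h'' u) u)
    (hineq : ∀ u ∈ Ioo a b, -C * h' u - c ≤ h'' u) :
    MonotoneOn (fun u => exp (C * u) * (C * h' u + c)) (Icc a b) := by
  have hderiv : ∀ u ∈ Icc a b, HasDerivAt (fun u => exp (C * u) * (C * h' u + c))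
      (C * exp (C * u) * (h'' u + C * h' u + c)) u := fun u hu => by
    have hexp : HasDerivAt (fun u => exp (C * u)) (exp (C * u) * C) u := by
      simpa using ((hasDerivAt_id u).const_mul C).exp
    exact (hexp.mul (((hd2 u hu).const_mul C).add_const c)).congr_deriv (by ring)
  refine monotoneOn_of_hasDerivWithinAt_nonneg (convex_Icc a b)
    (fun u hu => (hderiv u hu).continuousAt.continuousWithinAt)
    (fun u hu => (hderiv u (interior_subset hu)).hasDerivWithinAt) fun u hu => ?_
  rw [interior_Icc] at hu
  have := hineq u hu
  have : 0 ≤ h'' u + C * h' u + c := by linarith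
  positivity

lemma deriv_pos_of_exp_mul_lt (hC : 0 ≤ C) (hc : 0 ≤ c)
    (hd2 : ∀ u ∈ Icc a b, HasDerivAt h' (h'' u) u)
    (hineq : ∀ u ∈ Icc a b, -C * |h' u| - c ≤ h'' u)
    (hlt : exp (C * b) * c < exp (C * a) * (C * h' a + c)) :
    ∀ u ∈ Icc a b, 0 < h' u := by
  by_contra! hx
  obtain ⟨x, hx, hx0⟩ := hx
  have hcont : ContinuousOn h' (Icc a b) :=
    fun u hu => (hd2 u hu).continuousAt.continuousWithinAt
  obtain ⟨T, hT, hT0, hpos⟩ := exists_first_nonpos hcont hx hx0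
  have hsub : Icc a T ⊆ Icc a b := Icc_subset_Icc_right hT.2
  have hmono := monotoneOn_exp_mul_mul_add hC (fun u hu => hd2 u (hsub hu)) fun u hu => by
    simpa [abs_of_pos (hpos u (Ioo_subset_Ico_self hu))] using
      hineq u (hsub (Ioo_subset_Icc_self hu))
  have hle : exp (C * a) * (C * h' a + c) ≤ exp (C * T) * (C * h' T + c) :=
    hmono (left_mem_Icc.2 hT.1) (right_mem_Icc.2 hT.1) hT.1
  have : exp (C * T) * (C * h' T + c) ≤ exp (C * b) * c :=
    calc exp (C * T) * (C * h' T + c) ≤ exp (C * T) * c := by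
          gcongr; exact add_le_of_nonpos_left (mul_nonpos_of_nonneg_of_nonpos hC hT0)
      _ ≤ exp (C * b) * c := by gcongr; exact hT.2
  linarith

lemma exp_mul_mul_deriv_add_le (hab : a < b) (hC : 0 ≤ C) (hc : 0 ≤ c)
    (hd1 : ∀ u ∈ Icc a b, HasDerivAt h (h' u) u)
    (hd2 : ∀ u ∈ Icc a b, HasDerivAt h' (h'' u) u)
    (hineq : ∀ u ∈ Icc a b, -C * |h' u| - c ≤ h'' u) (hba : h b ≤ h a) :
    exp (C * a) * (C * h' a + c) ≤ exp (C * b) * c := by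
  by_contra! hlt
  have hpos := deriv_pos_of_exp_mul_lt hC hc hd2 hineq hlt
  have hmono : StrictMonoOn h (Icc a b) := strictMonoOn_of_hasDerivWithinAt_pos (convex_Icc a b)
    (fun u hu => (hd1 u hu).continuousAt.continuousWithinAt)
    (fun u hu => (hd1 u (interior_subset hu)).hasDerivWithinAt)
    fun u hu => hpos u (interior_subset hu)
  exact (hmono (left_mem_Icc.2 hab.le) (right_mem_Icc.2 hab.le) hab).not_ge hba

end IntegratingFactor

lemma le_mul_exp_mul (h h' h'' : ℝ → ℝ) (c C : ℝ) (hc : 0 ≤ c) (hC : 0 < C)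
    (hpos : ∀ t ∈ Icc (0:ℝ) 1, 0 ≤ h t) (h0 : h 0 = 0) (h1 : h 1 = 0)
    (hd1 : ∀ t ∈ Icc (0:ℝ) 1, HasDerivAt h (h' t) t)
    (hd2 : ∀ t ∈ Icc (0:ℝ) 1, HasDerivAt h' (h'' t) t)
    (hineq : ∀ t ∈ Icc (0:ℝ) 1, -C * |h' t| - c ≤ h'' t) :
    ∀ t ∈ Icc (0:ℝ) 1, h t ≤ c * exp C * t := by
  intro t ht
  rcases ht.1.eq_or_lt with rfl | ht0
  · simp [h0]
  obtain ⟨s, hs, hslope⟩ := exists_hasDerivAt_eq_slope h h' ht0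
    (fun u hu => (hd1 u ⟨hu.1, hu.2.trans ht.2⟩).continuousAt.continuousWithinAt)
    fun u hu => hd1 u ⟨hu.1.le, hu.2.le.trans ht.2⟩
  have hs1 : s < 1 := hs.2.trans_le ht.2
  have hsub : Icc s 1 ⊆ Icc 0 1 := Icc_subset_Icc_left hs.1.le
  have hfactor := exp_mul_mul_deriv_add_le hs1 hC.le hc (fun u hu => hd1 u (hsub hu))
    (fun u hu => hd2 u (hsub hu)) (fun u hu => hineq u (hsub hu))
    (by rw [h1]; exact hpos s ⟨hs.1.le, hs1.le⟩)
  have hslope_le : C * h' s + c ≤ exp C * c := by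
    rcases le_or_gt (C * h' s + c) 0 with hnonpos | hslope_pos
    · nlinarith [exp_pos C]
    · calc C * h' s + c ≤ exp (C * s) * (C * h' s + c) :=
            le_mul_of_one_le_left hslope_pos.le (one_le_exp (by nlinarith [hs.1]))
        _ ≤ exp C * c := by simpa using hfactor
  have hderiv : h' s ≤ c * exp C := by
    refine le_of_mul_le_mul_left ?_ hC
    nlinarith [exp_sub_one_le_mul_exp C]
  rw [h0, sub_zero, sub_zero] at hslope
  rw [hslope, div_le_iff₀ ht0] at hderiv
  exact hderiv

theorem stmt_2_general (h h' h'' : ℝ → ℝ) (c C : ℝ)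
    (hc : 0 < c) (hC : 0 < C)
    (hpos : ∀ t ∈ Set.Icc (0:ℝ) 1, 0 ≤ h t)
    (h0 : h 0 = 0) (h1 : h 1 = 0)
    (hd1 : ∀ t ∈ Set.Icc (0:ℝ) 1, HasDerivAt h (h' t) t)
    (hd2 : ∀ t ∈ Set.Icc (0:ℝ) 1, HasDerivAt h' (h'' t) t)
    (hineq : ∀ t ∈ Set.Icc (0:ℝ) 1, -C * |h' t| - c ≤ h'' t) :
    ∀ t ∈ Set.Icc (0:ℝ) 1, h t ≤ 4 * c * Real.exp (1 + C) * t * (1 - t) := by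
  intro t ht
  have hreflect : ∀ {u : ℝ}, u ∈ Icc (0:ℝ) 1 → 1 - u ∈ Icc (0:ℝ) 1 := fun hu =>
    ⟨by linarith [hu.2], by linarith [hu.1]⟩
  have hleft := le_mul_exp_mul h h' h'' c C hc.le hC hpos h0 h1 hd1 hd2 hineq t ht
  have hright : h t ≤ c * exp C * (1 - t) := by
    simpa using le_mul_exp_mul (fun u => h (1 - u)) (fun u => -h' (1 - u)) (fun u => h'' (1 - u))
      c C hc.le hC (fun u hu => hpos _ (hreflect hu)) (by simpa using h1) (by simpa using h0)
      (fun u hu => (hd1 _ (hreflect hu)).comp_const_sub 1 u)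
      (fun u hu => by simpa using ((hd2 _ (hreflect hu)).comp_const_sub 1 u).fun_neg)
      (fun u hu => by simpa using hineq _ (hreflect hu)) (1 - t) (hreflect ht)
  have hK : 0 ≤ c * exp C := by positivity
  have hmin : h t ≤ 2 * (c * exp C) * (t * (1 - t)) := by
    rcases le_total t (1 / 2) with hhalf | hhalf
    · nlinarith [mul_nonneg hK ht.1]
    · nlinarith [mul_nonneg hK (sub_nonneg.2 ht.2)]
  have he : 2 ≤ exp 1 := by linarith [add_one_le_exp (1 : ℝ)]
  rw [exp_add]
  nlinarith [mul_nonneg hK (mul_nonneg ht.1 (sub_nonneg.2 ht.2))]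

/-- If `h'' t ≥ -C*|h' t| - c` on `[0,1]` with `c, C > 0`,
then `h t ≤ 4 * c * e^(1+C) * t * (1-t)` on `[0,1]`. -/
theorem stmt_2 (h h' h'' : ℝ → ℝ) (c C : ℝ)
    (hc : 0 < c) (hC : 0 < C)
    (hpos : ∀ t ∈ Set.Icc (0:ℝ) 1, 0 ≤ h t)
    (h0 : h 0 = 0) (h1 : h 1 = 0)
    (hd1 : ∀ t ∈ Set.Icc (0:ℝ) 1, HasDerivAt h (h' t) t)
    (hd2 : ∀ t ∈ Set.Icc (0:ℝ) 1, HasDerivAt h' (h'' t) t)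
    (hcont : ContinuousOn h'' (Set.Icc (0:ℝ) 1))
    (hineq : ∀ t ∈ Set.Icc (0:ℝ) 1, -C * |h' t| - c ≤ h'' t) :
    ∀ t ∈ Set.Icc (0:ℝ) 1, h t ≤ 4 * c * Real.exp (1 + C) * t * (1 - t) :=
  stmt_2_general h h' h'' c C hc hC hpos h0 h1 hd1 hd2 hineq
end

section
/- Let λ = 1 + C and μ = 2c·e^{1+C}/(1+C), with c, C > 0. Suppose h : [0,1] → [0,∞) is C² with h(0) = h(1) = 0 and h''(t) ≥ -C|h'(t)| - c on [0,1]. Then for all t ∈ [0,1], h(t) ≤ μ·min{1 - e^{-λ t}, 1 - e^{-λ(1-t)}}. -/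
/-!
Barrier argument. With `L = 1 + C` and `μ = 2c e^L / L`, put `φ t = μ (1 - e^{-L t})`, so that
`φ'' = -L φ'` and `φ' t = 2c e^{L (1 - t)} ≥ 2c` on `[0,1]`. If `h - φ` were positive somewhere,
it would have an interior maximum `t₀`, where `h' t₀ = φ' t₀ > 0` and hence
`h'' t₀ - φ'' t₀ ≥ -C φ' t₀ - c + L φ' t₀ = φ' t₀ - c ≥ c > 0`, which is impossible at a maximum.
Applying this to `h (1 - ·)` as well gives the bound with the minimum.
-/

open Set Real Filter Topology

theorem IsLocalMax.hasDerivAt_nonpos_of_hasDerivAt {g g' : ℝ → ℝ} {x a : ℝ}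
    (hmax : IsLocalMax g x) (hg : ∀ᶠ y in 𝓝 x, HasDerivAt g (g' y) y)
    (hg' : HasDerivAt g' a x) : a ≤ 0 := by
  -- If `a > 0`, the second derivative test makes `x` a local minimum too, so `g` is locally
  -- constant and `g'` vanishes near `x`.
  by_contra! ha
  have hderiv : deriv g =ᶠ[𝓝 x] g' := hg.mono fun y hy => hy.deriv
  have hmin : IsLocalMin g x :=
    isLocalMin_of_deriv_deriv_pos (by rwa [hderiv.deriv_eq, hg'.deriv])
      (by rw [hderiv.eq_of_nhds]; exact hmax.hasDerivAt_eq_zero hg.self_of_nhds)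
      hg.self_of_nhds.continuousAt
  have hconst : g =ᶠ[𝓝 x] fun _ => g x :=
    (hmax.and hmin).mono fun y hy => le_antisymm hy.1 hy.2
  have hg'_zero : g' =ᶠ[𝓝 x] fun _ => 0 := by
    filter_upwards [hconst.eventuallyEq_nhds, hg] with y hy hgy
    exact hgy.unique ((hasDerivAt_const y (g x)).congr_of_eventuallyEq hy)
  exact ha.ne' (hg'.unique ((hasDerivAt_const x 0).congr_of_eventuallyEq hg'_zero))

theorem exists_mem_Ioo_isLocalMax_of_pos {g : ℝ → ℝ} {a b t : ℝ}
    (hg : ContinuousOn g (Icc a b)) (ha : g a ≤ 0) (hb : g b ≤ 0)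
    (ht : t ∈ Icc a b) (hgt : 0 < g t) : ∃ t₀ ∈ Ioo a b, IsLocalMax g t₀ := by
  obtain ⟨t₀, ht₀, hmax⟩ := isCompact_Icc.exists_isMaxOn ⟨t, ht⟩ hg
  have hpos : 0 < g t₀ := hgt.trans_le (hmax ht)
  have ht₀a : a ≠ t₀ := by rintro rfl; linarith
  have ht₀b : t₀ ≠ b := by rintro rfl; linarith
  have ht₀' : t₀ ∈ Ioo a b := ⟨ht₀.1.lt_of_ne ht₀a, ht₀.2.lt_of_ne ht₀b⟩
  exact ⟨t₀, ht₀', hmax.isLocalMax (Icc_mem_nhds ht₀'.1 ht₀'.2)⟩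

theorem le_mul_one_sub_exp_of_deriv_deriv_ge (h h' h'' : ℝ → ℝ) {c C : ℝ}
    (hc : 0 < c) (hL : 0 < 1 + C) (h0 : h 0 = 0) (h1 : h 1 = 0)
    (hd1 : ∀ t ∈ Icc (0:ℝ) 1, HasDerivAt h (h' t) t)
    (hd2 : ∀ t ∈ Icc (0:ℝ) 1, HasDerivAt h' (h'' t) t)
    (hineq : ∀ t ∈ Icc (0:ℝ) 1, -C * |h' t| - c ≤ h'' t) :
    ∀ t ∈ Icc (0:ℝ) 1, h t ≤ (2 * c * exp (1 + C) / (1 + C)) * (1 - exp (-(1 + C) * t)) := by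
  set L := 1 + C
  set μ := 2 * c * exp L / L
  set φ' : ℝ → ℝ := fun s => μ * L * exp (-L * s)
  have hφ : ∀ s, HasDerivAt (fun s => μ * (1 - exp (-L * s))) (φ' s) s := fun s =>
    (((hasDerivAt_const_mul (-L)).exp.const_sub 1).const_mul μ).congr_deriv (by ring)
  have hφ' : ∀ s, HasDerivAt φ' (-L * φ' s) s := fun s =>
    ((hasDerivAt_const_mul (-L)).exp.const_mul (μ * L)).congr_deriv (by ring)
  have hφ'_ge : ∀ s ≤ 1, 2 * c ≤ φ' s := fun s hs => by
    have hμL : μ * L = 2 * c * exp L := div_mul_cancel₀ _ hL.ne'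
    calc 2 * c ≤ 2 * c * exp (L * (1 - s)) :=
          le_mul_of_one_le_right (by positivity) (one_le_exp (by nlinarith))
      _ = φ' s := by simp only [φ', hμL, mul_assoc, ← exp_add]; ring_nf
  set g : ℝ → ℝ := fun s => h s - μ * (1 - exp (-L * s))
  have hg : ∀ s ∈ Icc (0:ℝ) 1, HasDerivAt g (h' s - φ' s) s := fun s hs =>
    (hd1 s hs).sub (hφ s)
  have hg0 : g 0 ≤ 0 := by simp [g, h0]
  have hg1 : g 1 ≤ 0 := by
    simp only [g, h1, mul_one, zero_sub, neg_nonpos]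
    exact mul_nonneg (by positivity) (sub_nonneg.2 (exp_le_one_iff.2 (by linarith)))
  intro t ht
  by_contra! hlt
  obtain ⟨t₀, ht₀, hmax⟩ := exists_mem_Ioo_isLocalMax_of_pos
    (fun s hs => (hg s hs).continuousAt.continuousWithinAt) hg0 hg1 ht (by simp only [g]; linarith)
  have ht₀' : t₀ ∈ Icc (0:ℝ) 1 := Ioo_subset_Icc_self ht₀
  have hslope : h' t₀ = φ' t₀ := sub_eq_zero.1 (hmax.hasDerivAt_eq_zero (hg t₀ ht₀'))
  have hconcave : h'' t₀ - -L * φ' t₀ ≤ 0 :=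
    hmax.hasDerivAt_nonpos_of_hasDerivAt
      (eventually_of_mem (Ioo_mem_nhds ht₀.1 ht₀.2) fun s hs => hg s (Ioo_subset_Icc_self hs))
      ((hd2 t₀ ht₀').sub (hφ' t₀))
  have hφ'_t₀ := hφ'_ge t₀ ht₀'.2
  have hsub := hineq t₀ ht₀'
  rw [hslope, abs_of_pos (by linarith)] at hsub
  linarith

theorem stmt_5_general (h h' h'' : ℝ → ℝ) (c C : ℝ)
    (hc : 0 < c) (hC : 0 < C)
    (h0 : h 0 = 0) (h1 : h 1 = 0)
    (hd1 : ∀ t ∈ Set.Icc (0:ℝ) 1, HasDerivAt h (h' t) t)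
    (hd2 : ∀ t ∈ Set.Icc (0:ℝ) 1, HasDerivAt h' (h'' t) t)
    (hineq : ∀ t ∈ Set.Icc (0:ℝ) 1, -C * |h' t| - c ≤ h'' t) :
    ∀ t ∈ Set.Icc (0:ℝ) 1,
      h t ≤ (2 * c * Real.exp (1 + C) / (1 + C)) *
        min (1 - Real.exp (-(1 + C) * t)) (1 - Real.exp (-(1 + C) * (1 - t))) := by
  have hL : 0 < 1 + C := by linarith
  have hrefl : ∀ s ∈ Icc (0:ℝ) 1, 1 - s ∈ Icc (0:ℝ) 1 := fun s hs =>
    ⟨by linarith [hs.2], by linarith [hs.1]⟩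
  have hflip : ∀ s, HasDerivAt (fun x : ℝ => 1 - x) (-1) s := fun s =>
    (hasDerivAt_id s).const_sub 1
  have hleft := le_mul_one_sub_exp_of_deriv_deriv_ge h h' h'' hc hL h0 h1 hd1 hd2 hineq
  have hright := le_mul_one_sub_exp_of_deriv_deriv_ge (fun s => h (1 - s))
    (fun s => -h' (1 - s)) (fun s => h'' (1 - s)) hc hL (by simpa using h1) (by simpa using h0)
    (fun s hs => ((hd1 _ (hrefl s hs)).comp s (hflip s)).congr_deriv (by ring))
    (fun s hs => ((hd2 _ (hrefl s hs)).comp s (hflip s)).neg.congr_deriv (by ring))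
    (fun s hs => by simpa only [abs_neg] using hineq _ (hrefl s hs))
  intro t ht
  rw [mul_min_of_nonneg _ _ (by positivity)]
  exact le_min (hleft t ht) (by simpa only [sub_sub_cancel] using hright (1 - t) (hrefl t ht))

/-- With `λ = 1 + C` and `μ = 2c e^(1+C)/(1+C)`, if `h` is C²,
nonnegative with `h 0 = h 1 = 0` and `h'' ≥ -C|h'| - c` on `[0,1]`, then
`h t ≤ μ * min (1 - e^(-λ t)) (1 - e^(-λ (1-t)))` for all `t ∈ [0,1]`. -/
theorem stmt_5 (h h' h'' : ℝ → ℝ) (c C : ℝ)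
    (hc : 0 < c) (hC : 0 < C)
    (hpos : ∀ t ∈ Set.Icc (0:ℝ) 1, 0 ≤ h t)
    (h0 : h 0 = 0) (h1 : h 1 = 0)
    (hd1 : ∀ t ∈ Set.Icc (0:ℝ) 1, HasDerivAt h (h' t) t)
    (hd2 : ∀ t ∈ Set.Icc (0:ℝ) 1, HasDerivAt h' (h'' t) t)
    (hcont : ContinuousOn h'' (Set.Icc (0:ℝ) 1))
    (hineq : ∀ t ∈ Set.Icc (0:ℝ) 1, -C * |h' t| - c ≤ h'' t) :
    ∀ t ∈ Set.Icc (0:ℝ) 1,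
      h t ≤ (2 * c * Real.exp (1 + C) / (1 + C)) *
        min (1 - Real.exp (-(1 + C) * t)) (1 - Real.exp (-(1 + C) * (1 - t))) :=
  stmt_5_general h h' h'' c C hc hC h0 h1 hd1 hd2 hineq
end

section
/- Let R : ℝ → Mat(n,n,ℝ) be continuous with R(t) symmetric, and let J₁⁰ be the matrix solution of J̈ + R(t)J = 0 with J(0) = 0, J̇(0) = I_n, and J₀¹ the solution with J(0) = I_n, J̇(0) = 0. Then for each t, the subspace L_t := {(h,q) ∈ ℝⁿ × ℝⁿ : J₀¹(t)h + J₁⁰(t)q = 0} is a Lagrangian subspace of (ℝⁿ × ℝⁿ, σ), where σ((h,q),(h',q')) = ⟨h,q'⟩ − ⟨h',q⟩. -/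
open Matrix

/-! Along solutions of `ẍ + R x = 0` with `R` symmetric, the Wronskian `⟨x, ẏ⟩ - ⟨y, ẋ⟩` is
constant. Hence the time-`t` flow `Φₜ (h, q) = (J₀¹ h + J₁⁰ q, J̇₀¹ h + J̇₁⁰ q)`, sending initial
data to position and velocity at time `t`, preserves `σ`. Being `σ`-preserving, `Φₜ` is injective,
hence invertible, so it pulls the vertical Lagrangian `{0} × ℝⁿ` back to a Lagrangian subspace,
and that pullback is `Lₜ`. -/

section Derivatives

variable {ι κ : Type*} [Fintype ι]

theorem HasDerivAt.dotProduct {x y : ℝ → ι → ℝ} {x' y' : ι → ℝ} {t : ℝ}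
    (hx : HasDerivAt x x' t) (hy : HasDerivAt y y' t) :
    HasDerivAt (fun s => x s ⬝ᵥ y s) (x' ⬝ᵥ y t + x t ⬝ᵥ y') t := by
  simp only [_root_.dotProduct, ← Finset.sum_add_distrib]
  exact HasDerivAt.fun_sum fun i _ =>
    (hasDerivAt_pi.1 hx i).mul (hasDerivAt_pi.1 hy i)

theorem hasDerivAt_mulVec_const {M : ℝ → Matrix κ ι ℝ} {M' : Matrix κ ι ℝ} {t : ℝ}
    (hM : ∀ i j, HasDerivAt (fun s => M s i j) (M' i j) t) (v : ι → ℝ) :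
    HasDerivAt (fun s => M s *ᵥ v) (M' *ᵥ v) t := by
  refine hasDerivAt_pi.2 fun i => ?_
  simp only [mulVec, dotProduct]
  exact HasDerivAt.fun_sum fun j _ => (hM i j).mul_const (v j)

end Derivatives

section Jacobi

variable {ι : Type*} [Fintype ι]

def IsJacobiSolution (R : ℝ → Matrix ι ι ℝ) (x x' : ℝ → ι → ℝ) : Prop :=
  ∀ t, HasDerivAt x (x' t) t ∧ HasDerivAt x' (-(R t *ᵥ x t)) t

theorem IsJacobiSolution.add {R : ℝ → Matrix ι ι ℝ} {x x' y y' : ℝ → ι → ℝ}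
    (hx : IsJacobiSolution R x x') (hy : IsJacobiSolution R y y') :
    IsJacobiSolution R (x + y) (x' + y') := fun t => by
  refine ⟨(hx t).1.add (hy t).1, ((hx t).2.add (hy t).2).congr_deriv ?_⟩
  simp only [Pi.add_apply, mulVec_add, neg_add]

theorem isJacobiSolution_mulVec {R J J' : ℝ → Matrix ι ι ℝ}
    (hJ : ∀ t i j, HasDerivAt (fun s => J s i j) (J' t i j) t)
    (hJ' : ∀ t i j, HasDerivAt (fun s => J' s i j) ((-(R t) * J t) i j) t) (v : ι → ℝ) :
    IsJacobiSolution R (fun s => J s *ᵥ v) (fun s => J' s *ᵥ v) := fun t => by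
  refine ⟨hasDerivAt_mulVec_const (hJ t) v, (hasDerivAt_mulVec_const (hJ' t) v).congr_deriv ?_⟩
  rw [← mulVec_mulVec, neg_mulVec]

theorem IsJacobiSolution.wronskian_eq {R : ℝ → Matrix ι ι ℝ} (hR : ∀ t, (R t)ᵀ = R t)
    {x x' y y' : ℝ → ι → ℝ} (hx : IsJacobiSolution R x x') (hy : IsJacobiSolution R y y')
    (s t : ℝ) :
    x s ⬝ᵥ y' s - y s ⬝ᵥ x' s = x t ⬝ᵥ y' t - y t ⬝ᵥ x' t := by
  have hderiv : ∀ u, HasDerivAt (fun s => x s ⬝ᵥ y' s - y s ⬝ᵥ x' s) 0 u := by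
    intro u
    refine (((hx u).1.dotProduct (hy u).2).fun_sub
      ((hy u).1.dotProduct (hx u).2)).congr_deriv ?_
    have hsymm : x u ⬝ᵥ R u *ᵥ y u = y u ⬝ᵥ R u *ᵥ x u := by
      rw [dotProduct_mulVec, ← mulVec_transpose, hR, dotProduct_comm]
    simp only [dotProduct_neg, hsymm, dotProduct_comm (x' u) (y' u)]
    ring
  exact is_const_of_deriv_eq_zero (fun u => (hderiv u).differentiableAt)
    (fun u => (hderiv u).deriv) s t

end Jacobi

section Symplectic

variable {ι : Type*} [Fintype ι]

def symplecticForm (p q : (ι → ℝ) × (ι → ℝ)) : ℝ := p.1 ⬝ᵥ q.2 - q.1 ⬝ᵥ p.2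

theorem eq_zero_of_symplecticForm_eq_zero {p : (ι → ℝ) × (ι → ℝ)}
    (h : ∀ q, symplecticForm p q = 0) : p = 0 := by
  have hp := h (-p.2, p.1)
  simp only [symplecticForm, neg_dotProduct, sub_neg_eq_add] at hp
  have hsq (v : ι → ℝ) : 0 ≤ v ⬝ᵥ v := by simpa using dotProduct_star_self_nonneg v
  obtain ⟨h1, h2⟩ := (add_eq_zero_iff_of_nonneg (hsq _) (hsq _)).1 hp
  exact Prod.ext (dotProduct_self_eq_zero.1 h1) (dotProduct_self_eq_zero.1 h2)

def IsLagrangian (L : Submodule ℝ ((ι → ℝ) × (ι → ℝ))) : Prop :=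
  Module.finrank ℝ L = Fintype.card ι ∧ ∀ p ∈ L, ∀ q ∈ L, symplecticForm p q = 0

theorem isLagrangian_ker_fst :
    IsLagrangian (LinearMap.ker (LinearMap.fst ℝ (ι → ℝ) (ι → ℝ))) := by
  refine ⟨?_, fun p hp q hq => ?_⟩
  · rw [LinearMap.ker_fst, LinearMap.finrank_range_of_inj LinearMap.inr_injective,
      Module.finrank_fintype_fun_eq_card]
  · simp_all [symplecticForm]

theorem injective_of_symplecticForm_map {Φ : ((ι → ℝ) × (ι → ℝ)) →ₗ[ℝ] (ι → ℝ) × (ι → ℝ)}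
    (hΦ : ∀ p q, symplecticForm (Φ p) (Φ q) = symplecticForm p q) : Function.Injective Φ := by
  refine (injective_iff_map_eq_zero Φ).2 fun p hp =>
    eq_zero_of_symplecticForm_eq_zero fun q => ?_
  rw [← hΦ, hp]
  simp [symplecticForm]

theorem IsLagrangian.comap {L : Submodule ℝ ((ι → ℝ) × (ι → ℝ))} (hL : IsLagrangian L)
    {Φ : ((ι → ℝ) × (ι → ℝ)) →ₗ[ℝ] (ι → ℝ) × (ι → ℝ)}
    (hΦ : ∀ p q, symplecticForm (Φ p) (Φ q) = symplecticForm p q) : IsLagrangian (L.comap Φ) := by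
  refine ⟨?_, fun p hp q hq => hΦ p q ▸ hL.2 _ hp _ hq⟩
  let e := LinearEquiv.ofInjectiveEndo Φ (injective_of_symplecticForm_map hΦ)
  have : L.comap Φ = L.map (e.symm : _ →ₗ[ℝ] _) := Submodule.comap_equiv_eq_map_symm e L
  rw [this, LinearEquiv.finrank_map_eq, hL.1]

end Symplectic

def blockMulVecLin {ι : Type*} [Fintype ι] (A B C D : Matrix ι ι ℝ) :
    ((ι → ℝ) × (ι → ℝ)) →ₗ[ℝ] (ι → ℝ) × (ι → ℝ) :=
  (A.mulVecLin.coprod B.mulVecLin).prod (C.mulVecLin.coprod D.mulVecLin)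

theorem stmt_18_general (n : ℕ) (R : ℝ → Matrix (Fin n) (Fin n) ℝ)
    (J01 J10 J01' J10' : ℝ → Matrix (Fin n) (Fin n) ℝ)
    (hRsymm : ∀ t, (R t)ᵀ = R t)
    (hJ01_0 : J01 0 = 1) (hJ01'_0 : J01' 0 = 0)
    (hJ10_0 : J10 0 = 0) (hJ10'_0 : J10' 0 = 1)
    (hdJ01 : ∀ t i j, HasDerivAt (fun s => J01 s i j) (J01' t i j) t)
    (hdJ10 : ∀ t i j, HasDerivAt (fun s => J10 s i j) (J10' t i j) t)
    (hdJ01' : ∀ t i j, HasDerivAt (fun s => J01' s i j) ((-(R t) * J01 t) i j) t)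
    (hdJ10' : ∀ t i j, HasDerivAt (fun s => J10' s i j) ((-(R t) * J10 t) i j) t) :
    ∀ t : ℝ, ∃ L : Submodule ℝ ((Fin n → ℝ) × (Fin n → ℝ)),
      (L : Set ((Fin n → ℝ) × (Fin n → ℝ))) =
          {p | (J01 t).mulVec p.1 + (J10 t).mulVec p.2 = 0} ∧
        Module.finrank ℝ L = n ∧
        ∀ p ∈ L, ∀ q ∈ L, p.1 ⬝ᵥ q.2 - q.1 ⬝ᵥ p.2 = 0 := by
  intro t
  let Φ := blockMulVecLin (J01 t) (J10 t) (J01' t) (J10' t)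
  have hsol (p : (Fin n → ℝ) × (Fin n → ℝ)) :=
    (isJacobiSolution_mulVec hdJ01 hdJ01' p.1).add (isJacobiSolution_mulVec hdJ10 hdJ10' p.2)
  have hΦ (p q) : symplecticForm (Φ p) (Φ q) = symplecticForm p q := by
    simpa [Φ, blockMulVecLin, symplecticForm, hJ01_0, hJ01'_0, hJ10_0, hJ10'_0]
      using (hsol p).wronskian_eq hRsymm (hsol q) t 0
  obtain ⟨hdim, hiso⟩ := isLagrangian_ker_fst.comap hΦ
  refine ⟨_, ?_, by simpa using hdim, hiso⟩
  ext p
  simp [Φ, blockMulVecLin]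

/-- With `J₀¹, J₁⁰` the fundamental matrix solutions of the Jacobi
equation `J̈ + R(t)J = 0` (with `J(0)=I, J̇(0)=0` resp. `J(0)=0, J̇(0)=I`, and each
`R t` symmetric), for each `t` the set
`L_t = {(h,q) : J₀¹(t)h + J₁⁰(t)q = 0}` is a Lagrangian subspace of `(ℝⁿ×ℝⁿ, σ)`. -/
theorem stmt_18 (n : ℕ) (R : ℝ → Matrix (Fin n) (Fin n) ℝ)
    (J01 J10 J01' J10' : ℝ → Matrix (Fin n) (Fin n) ℝ)
    (hRcont : ∀ i j, Continuous fun t => R t i j)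
    (hRsymm : ∀ t, (R t)ᵀ = R t)
    (hJ01_0 : J01 0 = 1) (hJ01'_0 : J01' 0 = 0)
    (hJ10_0 : J10 0 = 0) (hJ10'_0 : J10' 0 = 1)
    (hdJ01 : ∀ t i j, HasDerivAt (fun s => J01 s i j) (J01' t i j) t)
    (hdJ10 : ∀ t i j, HasDerivAt (fun s => J10 s i j) (J10' t i j) t)
    (hdJ01' : ∀ t i j, HasDerivAt (fun s => J01' s i j) ((-(R t) * J01 t) i j) t)
    (hdJ10' : ∀ t i j, HasDerivAt (fun s => J10' s i j) ((-(R t) * J10 t) i j) t) :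
    ∀ t : ℝ, ∃ L : Submodule ℝ ((Fin n → ℝ) × (Fin n → ℝ)),
      (L : Set ((Fin n → ℝ) × (Fin n → ℝ))) =
          {p | (J01 t).mulVec p.1 + (J10 t).mulVec p.2 = 0} ∧
        Module.finrank ℝ L = n ∧
        ∀ p ∈ L, ∀ q ∈ L, p.1 ⬝ᵥ q.2 - q.1 ⬝ᵥ p.2 = 0 :=
  stmt_18_general n R J01 J10 J01' J10' hRsymm hJ01_0 hJ01'_0 hJ10_0 hJ10'_0 hdJ01 hdJ10 hdJ01'
    hdJ10'
end
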